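/- Let N and M be positive integers. The two branches of the symmetric MAC DMT formula agree at the branch point: d^PPC_{1,M}(r₀) = d^PPC_{N,M}(N r₀) where r₀ = min(1, M/(N+1)). Consequently the function d^MAC-sym_{N,1,M}, defined piecewise by the two branches, is continuous and nonincreasing on [0, min(1, M/N)]. -/

import Mathlib

/-!
On `[0, 1]` the curve `d^PPC_{1,M}` is the line `M (1 - r)`. If `N < M`, the branch point is
`r₀ = 1`, the first branch covers the whole interval and both branches vanish at `r₀`.
If `M ≤ N`, then `N r` stays in the last segment `[M - 1, M]` of `d^PPC_{N,M}` on the second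
branch, where that curve is the line `(N - M + 1)(M - s)`. The two lines
`M (1 - r)` and `(N - M + 1)(M - N r)` differ by `(N - M)(M - (N + 1) r)`, so they cross
exactly at `r₀ = M/(N + 1)` and `d^MAC-sym_{N,1,M}` is their minimum, which is continuous and
nonincreasing.
-/

/-- The Zheng–Tse point-to-point DMT curve for `m` transmit and `n` receive antennas:
piecewise-linear interpolation of the points `(k, (m-k)(n-k))`, extended by `0`
for `r ≥ min m n`. -/
noncomputable def dPPC (m n : ℕ) (r : ℝ) : ℝ :=
  if min (m : ℝ) (n : ℝ) ≤ r then 0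
  else ((m : ℝ) - (⌊r⌋ : ℝ)) * ((n : ℝ) - (⌊r⌋ : ℝ))
    - (r - (⌊r⌋ : ℝ)) * ((m : ℝ) + (n : ℝ) - 2 * (⌊r⌋ : ℝ) - 1)

/-- The symmetric-MAC DMT curve for `N` users, each with `m` antennas, and an
`n`-antenna receiver. -/
noncomputable def dMACsym (N m n : ℕ) (r : ℝ) : ℝ :=
  if r ≤ min (m : ℝ) ((n : ℝ) / ((N : ℝ) + 1)) then dPPC m n r
  else dPPC (N * m) n ((N : ℝ) * r)

open Set

lemma dPPC_of_min_le {m n : ℕ} {r : ℝ} (h : min (m : ℝ) n ≤ r) : dPPC m n r = 0 :=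
  if_pos h

-- Also at `r = k + 1 = min m n`, where `dPPC` takes its `0` branch.
lemma dPPC_eq_of_mem_Icc {m n k : ℕ} (hk : k + 1 ≤ min m n) {r : ℝ}
    (hr : r ∈ Icc (k : ℝ) (k + 1)) :
    dPPC m n r = ((m : ℝ) - k) * ((n : ℝ) - k) - (r - k) * ((m : ℝ) + n - 2 * k - 1) := by
  obtain ⟨hkr, hrk⟩ := hr
  have hkm : (k : ℝ) + 1 ≤ m := by exact_mod_cast (le_min_iff.1 hk).1
  have hkn : (k : ℝ) + 1 ≤ n := by exact_mod_cast (le_min_iff.1 hk).2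
  rcases hrk.lt_or_eq with hlt | rfl
  · have hfloor : ⌊r⌋ = k := Int.floor_eq_iff.2 ⟨by exact_mod_cast hkr, by exact_mod_cast hlt⟩
    rw [dPPC, if_neg (by rw [not_le, lt_min_iff]; constructor <;> linarith), hfloor]
    push_cast
    ring
  · unfold dPPC
    split_ifs with hmin
    · rcases min_le_iff.1 hmin with hm | hn
      · linear_combination (-((n : ℝ) - k - 1)) * (le_antisymm hm hkm)
      · linear_combination (-((m : ℝ) - k - 1)) * (le_antisymm hn hkn)
    · have hfloor : ⌊(k : ℝ) + 1⌋ = k + 1 := by exact_mod_cast Int.floor_natCast (k + 1)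
      rw [hfloor]
      push_cast
      ring

lemma dPPC_one_of_mem_Icc {M : ℕ} (hM : 1 ≤ M) {r : ℝ} (hr : r ∈ Icc 0 1) :
    dPPC 1 M r = M * (1 - r) := by
  rw [dPPC_eq_of_mem_Icc (k := 0) (by simpa using hM) (by simpa using hr)]
  push_cast
  ring

lemma dPPC_of_mem_Icc_sub_one {N M : ℕ} (hM : 1 ≤ M) (hMN : M ≤ N) {s : ℝ}
    (hs : s ∈ Icc ((M : ℝ) - 1) M) :
    dPPC N M s = ((N : ℝ) - M + 1) * (M - s) := by
  have hk : M - 1 + 1 = M := Nat.sub_add_cancel hM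
  have hkR : ((M - 1 : ℕ) : ℝ) = M - 1 := by rw [Nat.cast_sub hM, Nat.cast_one]
  rw [dPPC_eq_of_mem_Icc (k := M - 1) (by rw [hk]; exact le_min hMN le_rfl)
    (by rwa [hkR, sub_add_cancel]), hkR]
  ring

lemma dPPC_one_eq_dPPC_mul_of_le {N M : ℕ} (hM : 1 ≤ M) (hMN : M ≤ N) :
    dPPC 1 M (M / (N + 1)) = dPPC N M (N * (M / (N + 1))) := by
  have hM1 : (1 : ℝ) ≤ M := by exact_mod_cast hM
  have hMN' : (M : ℝ) ≤ N := by exact_mod_cast hMN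
  have hN1 : (0 : ℝ) < N + 1 := by linarith
  have hr₀ : (M : ℝ) / (N + 1) ≤ 1 := by rw [div_le_one hN1]; linarith
  have hNr₀ : (N : ℝ) * (M / (N + 1)) ∈ Icc ((M : ℝ) - 1) M := by
    rw [mul_div_assoc', mem_Icc, le_div_iff₀ hN1, div_le_iff₀ hN1]
    constructor <;> nlinarith
  rw [dPPC_one_of_mem_Icc hM ⟨by positivity, hr₀⟩, dPPC_of_mem_Icc_sub_one hM hMN hNr₀]
  field_simp
  ring

lemma dMACsym_one_eqOn_min {N M : ℕ} (hM : 1 ≤ M) (hMN : M ≤ N) :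
    EqOn (dMACsym N 1 M) (fun r ↦ min ((M : ℝ) * (1 - r)) (((N : ℝ) - M + 1) * (M - N * r)))
      (Icc 0 ((M : ℝ) / N)) := by
  rintro r ⟨hr0, hrR⟩
  have hM1 : (1 : ℝ) ≤ M := by exact_mod_cast hM
  have hMN' : (M : ℝ) ≤ N := by exact_mod_cast hMN
  have hNr : (N : ℝ) * r ≤ M := by rwa [← le_div_iff₀' (by linarith)]
  have hcross : ((N : ℝ) - M + 1) * (M - N * r) - M * (1 - r) = (N - M) * (M - (N + 1) * r) := by
    ring
  have hbranch : min ((1 : ℕ) : ℝ) ((M : ℝ) / (N + 1)) = M / (N + 1) :=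
    min_eq_right (by rw [Nat.cast_one, div_le_one (by linarith)]; linarith)
  dsimp only
  rw [dMACsym, hbranch]
  split_ifs with hle
  · rw [le_div_iff₀ (by linarith)] at hle
    rw [dPPC_one_of_mem_Icc hM ⟨hr0, by nlinarith⟩, min_eq_left]
    rw [← sub_nonneg, hcross]
    exact mul_nonneg (by linarith) (by linarith)
  · rw [not_le, div_lt_iff₀ (by linarith)] at hle
    rw [Nat.mul_one, dPPC_of_mem_Icc_sub_one hM hMN ⟨by nlinarith, hNr⟩, min_eq_right]
    rw [← sub_nonpos, hcross]
    exact mul_nonpos_of_nonneg_of_nonpos (by linarith) (by linarith)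

lemma dMACsym_one_eqOn_of_lt {N M : ℕ} (hNM : N < M) :
    EqOn (dMACsym N 1 M) (fun r ↦ (M : ℝ) * (1 - r)) (Icc 0 1) := by
  intro r hr
  have hNM' : (N : ℝ) + 1 ≤ M := by exact_mod_cast hNM
  have hbranch : min ((1 : ℕ) : ℝ) ((M : ℝ) / (N + 1)) = 1 := by
    rw [Nat.cast_one, min_eq_left ((one_le_div (by positivity)).2 hNM')]
  rw [dMACsym, hbranch, if_pos hr.2, dPPC_one_of_mem_Icc (Nat.one_le_of_lt hNM) hr]

theorem stmt14_general (N M : ℕ) (hM : 1 ≤ M) :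
    dPPC 1 M (min 1 ((M : ℝ) / ((N : ℝ) + 1)))
      = dPPC N M ((N : ℝ) * min 1 ((M : ℝ) / ((N : ℝ) + 1))) ∧
    ContinuousOn (dMACsym N 1 M) (Set.Icc 0 (min 1 ((M : ℝ) / (N : ℝ)))) ∧
    AntitoneOn (dMACsym N 1 M) (Set.Icc 0 (min 1 ((M : ℝ) / (N : ℝ)))) := by
  rcases le_or_gt M N with hMN | hNM
  · have hMN' : (M : ℝ) ≤ N := by exact_mod_cast hMN
    have hN0 : (0 : ℝ) < N := by linarith [(Nat.one_le_cast (α := ℝ)).2 hM]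
    rw [min_eq_right ((div_le_one (by linarith)).2 (by linarith)),
      min_eq_right ((div_le_one hN0).2 hMN')]
    refine ⟨dPPC_one_eq_dPPC_mul_of_le hM hMN,
      (Continuous.continuousOn (by fun_prop)).congr (dMACsym_one_eqOn_min hM hMN),
      (Antitone.antitoneOn (fun a b hab ↦ min_le_min ?_ ?_) _).congr
        (dMACsym_one_eqOn_min hM hMN).symm⟩ <;> gcongr
  · have hNM' : (N : ℝ) + 1 ≤ M := by exact_mod_cast hNM
    have hsub : Icc 0 (min 1 ((M : ℝ) / N)) ⊆ Icc 0 1 := Icc_subset_Icc le_rfl (min_le_left _ _)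
    refine ⟨?_, ((Continuous.continuousOn (by fun_prop)).congr
        (dMACsym_one_eqOn_of_lt hNM)).mono hsub,
      ((Antitone.antitoneOn (fun a b hab ↦ ?_) _).congr
        (dMACsym_one_eqOn_of_lt hNM).symm).mono hsub⟩
    · rw [min_eq_left ((one_le_div (by positivity)).2 hNM'), mul_one,
        dPPC_one_of_mem_Icc hM ⟨zero_le_one, le_rfl⟩,
        dPPC_of_min_le (min_eq_left (by linarith)).le, sub_self, mul_zero]
    · gcongr

/-- the two branches of the symmetric-MAC DMT formula agree at the
branch point `r₀ = min(1, M/(N+1))`, i.e. `d^PPC_{1,M}(r₀) = d^PPC_{N,M}(N r₀)`;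
consequently `d^MAC-sym_{N,1,M}` is continuous and nonincreasing on
`[0, min(1, M/N)]`. -/
theorem stmt14 (N M : ℕ) (hN : 1 ≤ N) (hM : 1 ≤ M) :
    dPPC 1 M (min 1 ((M : ℝ) / ((N : ℝ) + 1)))
      = dPPC N M ((N : ℝ) * min 1 ((M : ℝ) / ((N : ℝ) + 1))) ∧
    ContinuousOn (dMACsym N 1 M) (Set.Icc 0 (min 1 ((M : ℝ) / (N : ℝ)))) ∧
    AntitoneOn (dMACsym N 1 M) (Set.Icc 0 (min 1 ((M : ℝ) / (N : ℝ)))) :=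
  stmt14_general N M hM
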